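/- If a tWF net N is substitution-sound, M is a disjoint substitution-sound pWF net, and p is a place of N, then N ⊗_p M is substitution-sound. -/

import Mathlib

structure Net where
  P : Finset ℕ
  T : Finset ℕ
  F : Finset (ℕ × ℕ)
  I : Finset ℕ
  O : Finset ℕ

namespace Net

def nodes (N : Net) : Finset ℕ := N.P ∪ N.T

def IsPetri (N : Net) : Prop :=
  Disjoint N.P N.T ∧ ∀ e ∈ N.F, (e.1 ∈ N.P ∧ e.2 ∈ N.T) ∨ (e.1 ∈ N.T ∧ e.2 ∈ N.P)

def edge (N : Net) (x y : ℕ) : Prop := (x, y) ∈ N.F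

def pathReach (N : Net) : ℕ → ℕ → Prop := Relation.ReflTransGen N.edge

def Connected (N : Net) : Prop :=
  (∀ x ∈ N.nodes, ∃ i ∈ N.I, N.pathReach i x) ∧
  (∀ x ∈ N.nodes, ∃ o ∈ N.O, N.pathReach x o)

/-- place workflow net -/
def IsPWF (N : Net) : Prop :=
  N.IsPetri ∧ N.I ⊆ N.P ∧ N.O ⊆ N.P ∧ N.I.Nonempty ∧ N.O.Nonempty ∧ N.Connected

/-- transition workflow net -/
def IsTWF (N : Net) : Prop :=
  N.IsPetri ∧ N.I ⊆ N.T ∧ N.O ⊆ N.T ∧ N.I.Nonempty ∧ N.O.Nonempty ∧ N.Connected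

def IsWF (N : Net) : Prop := N.IsPWF ∨ N.IsTWF

abbrev Marking := ℕ → ℕ

def pre (N : Net) (t : ℕ) : Marking := fun p => if (p, t) ∈ N.F then 1 else 0
def post (N : Net) (t : ℕ) : Marking := fun p => if (t, p) ∈ N.F then 1 else 0
def enabled (N : Net) (t : ℕ) (m : Marking) : Prop := t ∈ N.T ∧ N.pre t ≤ m
def fire (N : Net) (t : ℕ) (m : Marking) : Marking := fun p => m p - N.pre t p + N.post t p
def stepRel (N : Net) (m m' : Marking) : Prop := ∃ t, N.enabled t m ∧ m' = N.fire t m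
def reach (N : Net) : Marking → Marking → Prop := Relation.ReflTransGen N.stepRel

/-- the marking with `k` tokens on each element of `S` -/
def bag (k : ℕ) (S : Finset ℕ) : Marking := fun p => if p ∈ S then k else 0

def kSound (N : Net) (k : ℕ) : Prop :=
  ∀ m, N.reach (bag k N.I) m → N.reach m (bag k N.O)

def starSound (N : Net) : Prop := ∀ k, 1 ≤ k → N.kSound k

def subSound (N : Net) : Prop :=
  ∀ k k' : ℕ, k' ≤ k → ∀ m : Marking,
    N.reach (bag k N.I) (m + bag k' N.O) → N.reach m (bag (k - k') N.O)

/-- place completion of a tWF net -/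
def pc (N : Net) (pi po : ℕ) : Net where
  P := insert pi (insert po N.P)
  T := N.T
  F := (N.I.image fun t => (pi, t)) ∪ (N.O.image fun t => (t, po)) ∪ N.F
  I := {pi}
  O := {po}

/-- transition completion of a pWF net -/
def tc (N : Net) (t_i t_o : ℕ) : Net where
  P := N.P
  T := insert t_i (insert t_o N.T)
  F := (N.I.image fun p => (t_i, p)) ∪ (N.O.image fun p => (p, t_o)) ∪ N.F
  I := {t_i}
  O := {t_o}

/-- *-soundness of a tWF net: its place completion (for fresh names) is *-sound -/
def tStarSound (N : Net) : Prop :=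
  ∀ pi po : ℕ, pi ∉ N.nodes → po ∉ N.nodes → pi ≠ po → (N.pc pi po).starSound

/-- sub-soundness of a tWF net: its place completion (for fresh names) is sub-sound -/
def tSubSound (N : Net) : Prop :=
  ∀ pi po : ℕ, pi ∉ N.nodes → po ∉ N.nodes → pi ≠ po → (N.pc pi po).subSound

/-- preset of a node, as a finset -/
def inEdges (N : Net) (n : ℕ) : Finset ℕ := (N.F.filter fun e => e.2 = n).image Prod.fst
/-- postset of a node, as a finset -/
def outEdges (N : Net) (n : ℕ) : Finset ℕ := (N.F.filter fun e => e.1 = n).image Prod.snd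

/-- substitution of the node `n` of `N` by the net `M` (place or transition substitution,
depending on the type of `n`): each input node of `M` inherits the preset of `n`, each
output node of `M` inherits the postset of `n`. -/
def subst (N : Net) (n : ℕ) (M : Net) : Net where
  P := (N.P.erase n) ∪ M.P
  T := (N.T.erase n) ∪ M.T
  F := (N.F.filter fun e => e.1 ≠ n ∧ e.2 ≠ n) ∪ M.F
        ∪ (N.inEdges n ×ˢ M.I) ∪ (M.O ×ˢ N.outEdges n)
  I := if n ∈ N.I then (N.I.erase n) ∪ M.I else N.I
  O := if n ∈ N.O then (N.O.erase n) ∪ M.O else N.O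

def Acyclic (N : Net) : Prop := ∀ x, ¬ Relation.TransGen N.edge x x

/-- AND net condition (on top of being a WF net) -/
def IsAND (N : Net) : Prop :=
  N.Acyclic ∧ ∀ p ∈ N.P,
    ((p ∈ N.I ∧ (N.inEdges p).card = 0) ∨ (p ∉ N.I ∧ (N.inEdges p).card = 1)) ∧
    ((p ∈ N.O ∧ (N.outEdges p).card = 0) ∨ (p ∉ N.O ∧ (N.outEdges p).card = 1))

/-- OR net condition (on top of being a WF net) -/
def IsOR (N : Net) : Prop :=
  ∀ t ∈ N.T,
    ((t ∈ N.I ∧ (N.inEdges t).card = 0) ∨ (t ∉ N.I ∧ (N.inEdges t).card = 1)) ∧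
    ((t ∈ N.O ∧ (N.outEdges t).card = 0) ∨ (t ∉ N.O ∧ (N.outEdges t).card = 1))

end Net

/-!
Fix fresh names `a`, `b`. Place completion commutes with the substitution of the internal
place `p`, `pc(N ⊗_p M) = pc(N) ⊗_p M`, so it suffices that place substitution preserves
sub-soundness; renaming the fresh places then handles arbitrary fresh names.

For the substitution `K ⊗_p M`, every reachable marking splits into a reachable marking `ν` of
`K` together with a marking `μ` of `M` reached after `a` tokens entered `M` and `b` left it,
where `ν p = a - b`. A sub-sound `M` never emits more tokens than it received, which is what
makes a transition of `K` consuming from the outputs of `M` enabled in `K`. To terminate from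
`m + k'.O`, first let `M` finish `μ` (sub-soundness of `M`); the result represents a marking of
`K`, which terminates by sub-soundness of `K`, each firing of `K` that feeds `p` being followed
by a complete run of `M`.
-/

lemma Finset.map_equiv_eq_self {α : Type*} [DecidableEq α] {σ : α ≃ α} {S : Finset α}
    (h : ∀ x ∈ S, σ x = x) : S.map σ.toEmbedding = S := by
  rw [Finset.map_eq_image]
  exact (Finset.image_congr h).trans Finset.image_id'

namespace Net

lemma bag_zero (S : Finset ℕ) : bag 0 S = 0 := by
  funext q; simp [bag]

lemma bag_add (a b : ℕ) (S : Finset ℕ) : bag (a + b) S = bag a S + bag b S := by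
  funext q; simp only [bag, Pi.add_apply]; split <;> simp

lemma stepRel_iff {X : Net} {m m' : Marking} :
    X.stepRel m m' ↔ ∃ t ∈ X.T, ∃ x, m = x + X.pre t ∧ m' = x + X.post t := by
  constructor
  · rintro ⟨t, ⟨ht, hle⟩, rfl⟩
    refine ⟨t, ht, m - X.pre t, ?_, rfl⟩
    funext q
    have : X.pre t q ≤ m q := hle q
    simp only [Pi.add_apply, Pi.sub_apply]
    omega
  · rintro ⟨t, ht, x, rfl, rfl⟩
    refine ⟨t, ⟨ht, le_add_self⟩, ?_⟩
    funext q
    simp only [fire, Pi.add_apply]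
    omega

lemma stepRel_add_pre {X : Net} {t : ℕ} (ht : t ∈ X.T) (x : Marking) :
    X.stepRel (x + X.pre t) (x + X.post t) :=
  stepRel_iff.2 ⟨t, ht, x, rfl, rfl⟩

lemma reach_add_right {X : Net} {m m' : Marking} (h : X.reach m m') (x : Marking) :
    X.reach (m + x) (m' + x) := by
  refine Relation.ReflTransGen.lift (· + x) (fun a b hab => ?_) _ _ h
  obtain ⟨t, ht, y, rfl, rfl⟩ := stepRel_iff.1 hab
  show X.stepRel (y + X.pre t + x) (y + X.post t + x)
  simpa only [add_right_comm] using stepRel_add_pre ht (y + x)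

lemma reach_add_left {X : Net} {m m' : Marking} (h : X.reach m m') (x : Marking) :
    X.reach (x + m) (x + m') := by
  simpa only [add_comm x] using reach_add_right h x

section Petri

variable {X : Net}

lemma IsPetri.mem_nodes_of_mem_F (hX : X.IsPetri) {x y : ℕ} (h : (x, y) ∈ X.F) :
    x ∈ X.nodes ∧ y ∈ X.nodes := by
  rcases hX.2 _ h with ⟨h1, h2⟩ | ⟨h1, h2⟩ <;> simp [nodes, h1, h2]

lemma IsPetri.pre_apply_eq_zero (hX : X.IsPetri) {t q : ℕ} (ht : t ∈ X.T) (hq : q ∉ X.P) :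
    X.pre t q = 0 := by
  simp only [pre, ite_eq_right_iff, one_ne_zero, imp_false]
  intro hF
  rcases hX.2 _ hF with h | h
  · exact hq h.1
  · exact Finset.disjoint_left.1 hX.1 h.2 ht

lemma IsPetri.post_apply_eq_zero (hX : X.IsPetri) {t q : ℕ} (ht : t ∈ X.T) (hq : q ∉ X.P) :
    X.post t q = 0 := by
  simp only [post, ite_eq_right_iff, one_ne_zero, imp_false]
  intro hF
  rcases hX.2 _ hF with h | h
  · exact Finset.disjoint_left.1 hX.1 h.1 ht
  · exact hq h.2

lemma IsPetri.reach_apply_of_notMem (hX : X.IsPetri) {m m' : Marking} (h : X.reach m m')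
    {q : ℕ} (hq : q ∉ X.P) : m' q = m q := by
  induction h with
  | refl => rfl
  | tail _ hs ih =>
    obtain ⟨t, ht, x, rfl, rfl⟩ := stepRel_iff.1 hs
    simpa [hX.pre_apply_eq_zero ht hq, hX.post_apply_eq_zero ht hq] using ih

lemma IsPetri.reach_bag_apply_eq_zero (hX : X.IsPetri) (hI : X.I ⊆ X.P) {k : ℕ}
    {m : Marking} (h : X.reach (bag k X.I) m) {q : ℕ} (hq : q ∉ X.P) : m q = 0 := by
  rw [hX.reach_apply_of_notMem h hq, bag, if_neg fun h => hq (hI h)]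

lemma IsPWF.exists_mem_F_of_mem_T (hX : X.IsPWF) {t : ℕ} (ht : t ∈ X.T) :
    ∃ q, (t, q) ∈ X.F := by
  obtain ⟨o, ho, hpath⟩ := hX.2.2.2.2.2.2 t (Finset.mem_union_right _ ht)
  rcases Relation.reflTransGen_iff_eq_or_transGen.1 hpath with rfl | h
  · exact absurd ht (Finset.disjoint_left.1 hX.1.1 (hX.2.2.1 ho))
  · obtain ⟨q, hq, -⟩ := Relation.TransGen.head'_iff.1 h
    exact ⟨q, hq⟩

lemma IsPWF.eq_zero_of_reach_zero (hX : X.IsPWF) {m : Marking} (h : X.reach m 0) : m = 0 := by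
  induction h using Relation.ReflTransGen.head_induction_on with
  | refl => rfl
  | head hs _ ih =>
    obtain ⟨t, ht, x, rfl, rfl⟩ := stepRel_iff.1 hs
    obtain ⟨q, hq⟩ := hX.exists_mem_F_of_mem_T ht
    simpa [post, hq] using congrFun ih q

lemma subSound.reach_bag (hX : X.subSound) (k : ℕ) : X.reach (bag k X.I) (bag k X.O) := by
  simpa using hX k 0 k.zero_le (bag k X.I) (by rw [bag_zero, add_zero]; exact .refl)

lemma IsPWF.le_of_reach_bag (hX : X.IsPWF) (hs : X.subSound) {a b : ℕ} {μ : Marking}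
    (h : X.reach (bag a X.I) (μ + bag b X.O)) : b ≤ a := by
  by_contra! hab
  obtain ⟨c, rfl⟩ := Nat.exists_eq_add_of_lt hab
  rw [show a + c + 1 = (c + 1) + a by omega, bag_add, ← add_assoc] at h
  have h0 := hX.eq_zero_of_reach_zero (by simpa [bag_zero] using hs a a le_rfl _ h)
  obtain ⟨o, ho⟩ := hX.2.2.2.2.1
  simpa [bag, ho] using congrFun h0 o

end Petri

lemma mem_inEdges {X : Net} {x n : ℕ} : x ∈ X.inEdges n ↔ (x, n) ∈ X.F := by
  simp [inEdges]

lemma mem_outEdges {X : Net} {y n : ℕ} : y ∈ X.outEdges n ↔ (n, y) ∈ X.F := by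
  simp [outEdges]

/-- The marking of `K ⊗_p M` standing for the marking `m` of `K`: each token on `p` becomes one
token on every place of `S` (the input or the output places of `M`). -/
def expandAt (p : ℕ) (S : Finset ℕ) (m : Marking) : Marking :=
  Function.update m p 0 + bag (m p) S

lemma expandAt_add (p : ℕ) (S : Finset ℕ) (m n : Marking) :
    expandAt p S (m + n) = expandAt p S m + expandAt p S n := by
  funext q
  simp only [expandAt, Pi.add_apply, Function.update_apply, bag]
  split_ifs <;> omega

lemma expandAt_eq_self {p : ℕ} {m : Marking} (hp : m p = 0) (S : Finset ℕ) :
    expandAt p S m = m := by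
  rw [expandAt, hp, bag_zero, add_zero, Function.update_eq_self_iff, hp]

section Subst

variable {K M : Net} {p : ℕ}

lemma mem_subst_F {x y : ℕ} :
    (x, y) ∈ (K.subst p M).F ↔
      ((x, y) ∈ K.F ∧ x ≠ p ∧ y ≠ p) ∨ (x, y) ∈ M.F ∨
      ((x, p) ∈ K.F ∧ y ∈ M.I) ∨ (x ∈ M.O ∧ (p, y) ∈ K.F) := by
  simp only [subst, Finset.mem_union, Finset.mem_filter, Finset.mem_product, mem_inEdges,
    mem_outEdges, or_assoc]

lemma subst_T (hpT : p ∉ K.T) : (K.subst p M).T = K.T ∪ M.T := by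
  simp [subst, Finset.erase_eq_of_notMem hpT]

lemma subst_I (hpI : p ∉ K.I) : (K.subst p M).I = K.I := if_neg hpI

lemma subst_O (hpO : p ∉ K.O) : (K.subst p M).O = K.O := if_neg hpO

lemma nodes_subst_subset : (K.subst p M).nodes ⊆ K.nodes ∪ M.nodes := by
  intro x hx
  simp only [nodes, subst, Finset.mem_union, Finset.mem_erase] at hx ⊢
  tauto

lemma IsPetri.subst (hK : K.IsPetri) (hM : M.IsPWF) (hd : Disjoint K.nodes M.nodes)
    (hp : p ∈ K.P) : (K.subst p M).IsPetri := by
  have hKM : ∀ {x}, x ∈ K.nodes → x ∉ M.nodes := fun hx => Finset.disjoint_left.1 hd hx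
  have hpT : p ∉ K.T := Finset.disjoint_left.1 hK.1 hp
  constructor
  · simp only [Net.subst, Finset.disjoint_left, Finset.mem_union, Finset.mem_erase]
    rintro x (⟨-, hx⟩ | hx) (⟨-, hx'⟩ | hx')
    · exact Finset.disjoint_left.1 hK.1 hx hx'
    · exact hKM (Finset.mem_union_left _ hx) (Finset.mem_union_right _ hx')
    · exact hKM (Finset.mem_union_right _ hx') (Finset.mem_union_left _ hx)
    · exact Finset.disjoint_left.1 hM.1.1 hx hx'
  · rintro ⟨x, y⟩ he
    simp only [Net.subst, Finset.mem_union, Finset.mem_erase]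
    rcases mem_subst_F.1 he with ⟨h, hx, hy⟩ | h | ⟨h, hy⟩ | ⟨hx, h⟩
    · rcases hK.2 _ h with ⟨h1, h2⟩ | ⟨h1, h2⟩
      · exact Or.inl ⟨Or.inl ⟨hx, h1⟩, Or.inl ⟨hy, h2⟩⟩
      · exact Or.inr ⟨Or.inl ⟨hx, h1⟩, Or.inl ⟨hy, h2⟩⟩
    · rcases hM.1.2 _ h with ⟨h1, h2⟩ | ⟨h1, h2⟩
      · exact Or.inl ⟨Or.inr h1, Or.inr h2⟩
      · exact Or.inr ⟨Or.inr h1, Or.inr h2⟩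
    · rcases hK.2 _ h with ⟨-, h2⟩ | ⟨h1, -⟩
      · exact absurd h2 hpT
      · exact Or.inr ⟨Or.inl ⟨fun h => hpT (h ▸ h1), h1⟩, Or.inr (hM.2.1 hy)⟩
    · rcases hK.2 _ h with ⟨-, h2⟩ | ⟨h1, -⟩
      · exact Or.inl ⟨Or.inr (hM.2.2.1 hx), Or.inl ⟨fun h => hpT (h ▸ h2), h2⟩⟩
      · exact absurd h1 hpT

lemma pre_subst_of_mem_left (hK : K.IsPetri) (hM : M.IsPWF) (hd : Disjoint K.nodes M.nodes)
    (hp : p ∈ K.P) {t : ℕ} (ht : t ∈ K.T) :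
    (K.subst p M).pre t = expandAt p M.O (K.pre t) := by
  have htM : t ∉ M.nodes := Finset.disjoint_left.1 hd (Finset.mem_union_right _ ht)
  have htp : t ≠ p := fun h => Finset.disjoint_left.1 hK.1 hp (h ▸ ht)
  have hpO : p ∉ M.O := fun h => Finset.disjoint_left.1 hd (Finset.mem_union_left _ hp)
    (Finset.mem_union_left _ (hM.2.2.1 h))
  funext q
  have hMF : (q, t) ∉ M.F := fun h => htM (hM.1.mem_nodes_of_mem_F h).2
  have hMI : t ∉ M.I := fun h => htM (Finset.mem_union_left _ (hM.2.1 h))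
  have hKF : q ∈ M.O → (q, t) ∉ K.F := fun hq h => Finset.disjoint_left.1 hd
    (hK.mem_nodes_of_mem_F h).1 (Finset.mem_union_left _ (hM.2.2.1 hq))
  simp only [pre, expandAt, mem_subst_F, Pi.add_apply, Function.update_apply, bag]
  by_cases hqp : q = p
  · subst hqp
    simp [hpO, hMF, hMI]
  · by_cases hqO : q ∈ M.O <;> simp [hqp, hqO, hMF, hMI, hKF, htp]

lemma post_subst_of_mem_left (hK : K.IsPetri) (hM : M.IsPWF) (hd : Disjoint K.nodes M.nodes)
    (hp : p ∈ K.P) {t : ℕ} (ht : t ∈ K.T) :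
    (K.subst p M).post t = expandAt p M.I (K.post t) := by
  have htM : t ∉ M.nodes := Finset.disjoint_left.1 hd (Finset.mem_union_right _ ht)
  have htp : t ≠ p := fun h => Finset.disjoint_left.1 hK.1 hp (h ▸ ht)
  have hpI : p ∉ M.I := fun h => Finset.disjoint_left.1 hd (Finset.mem_union_left _ hp)
    (Finset.mem_union_left _ (hM.2.1 h))
  funext q
  have hMF : (t, q) ∉ M.F := fun h => htM (hM.1.mem_nodes_of_mem_F h).1
  have hMO : t ∉ M.O := fun h => htM (Finset.mem_union_left _ (hM.2.2.1 h))
  have hKF : q ∈ M.I → (t, q) ∉ K.F := fun hq h => Finset.disjoint_left.1 hd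
    (hK.mem_nodes_of_mem_F h).2 (Finset.mem_union_left _ (hM.2.1 hq))
  simp only [post, expandAt, mem_subst_F, Pi.add_apply, Function.update_apply, bag]
  by_cases hqp : q = p
  · subst hqp
    simp [hpI, hMF, hMO]
  · by_cases hqI : q ∈ M.I <;> simp [hqp, hqI, hMF, hMO, hKF, htp]

lemma pre_subst_of_mem_right (hK : K.IsPetri) (hM : M.IsPWF) (hd : Disjoint K.nodes M.nodes)
    {t : ℕ} (ht : t ∈ M.T) : (K.subst p M).pre t = M.pre t := by
  have htK : t ∉ K.nodes := Finset.disjoint_right.1 hd (Finset.mem_union_right _ ht)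
  have hMI : t ∉ M.I := fun h => Finset.disjoint_left.1 hM.1.1 (hM.2.1 h) ht
  have hKF : ∀ x, (x, t) ∉ K.F := fun x h => htK (hK.mem_nodes_of_mem_F h).2
  funext q
  simp [pre, mem_subst_F, hMI, hKF]

lemma post_subst_of_mem_right (hK : K.IsPetri) (hM : M.IsPWF) (hd : Disjoint K.nodes M.nodes)
    {t : ℕ} (ht : t ∈ M.T) : (K.subst p M).post t = M.post t := by
  have htK : t ∉ K.nodes := Finset.disjoint_right.1 hd (Finset.mem_union_right _ ht)
  have hMO : t ∉ M.O := fun h => Finset.disjoint_left.1 hM.1.1 (hM.2.2.1 h) ht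
  have hKF : ∀ y, (t, y) ∉ K.F := fun y h => htK (hK.mem_nodes_of_mem_F h).1
  funext q
  simp [post, mem_subst_F, hMO, hKF]

lemma reach_subst_of_reach_right (hK : K.IsPetri) (hM : M.IsPWF)
    (hd : Disjoint K.nodes M.nodes) {m m' : Marking} (h : M.reach m m') :
    (K.subst p M).reach m m' := by
  refine Relation.ReflTransGen.lift id (fun a b hab => ?_) _ _ h
  obtain ⟨t, ht, x, rfl, rfl⟩ := stepRel_iff.1 hab
  rw [← pre_subst_of_mem_right hK hM hd ht, ← post_subst_of_mem_right hK hM hd ht]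
  exact stepRel_add_pre (Finset.mem_union_right _ ht) x

lemma reach_subst_expandAt (hK : K.IsPetri) (hM : M.IsPWF) (hd : Disjoint K.nodes M.nodes)
    (hsM : M.subSound) (m : Marking) :
    (K.subst p M).reach (expandAt p M.I m) (expandAt p M.O m) :=
  reach_add_left (reach_subst_of_reach_right hK hM hd (hsM.reach_bag (m p))) _

lemma reach_subst_of_reach_left (hK : K.IsPetri) (hM : M.IsPWF)
    (hd : Disjoint K.nodes M.nodes) (hp : p ∈ K.P) (hsM : M.subSound) {ν ν' : Marking}
    (h : K.reach ν ν') : (K.subst p M).reach (expandAt p M.O ν) (expandAt p M.O ν') := by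
  refine Relation.ReflTransGen.lift' (expandAt p M.O) (fun a b hab => ?_) _ _ h
  obtain ⟨t, ht, x, rfl, rfl⟩ := stepRel_iff.1 hab
  have htT : t ∈ (K.subst p M).T := Finset.mem_union_left _
    (Finset.mem_erase.2 ⟨fun h => Finset.disjoint_left.1 hK.1 hp (h ▸ ht), ht⟩)
  have hstep := stepRel_add_pre htT (expandAt p M.O x)
  rw [pre_subst_of_mem_left hK hM hd hp ht, post_subst_of_mem_left hK hM hd hp ht] at hstep
  show (K.subst p M).reach (expandAt p M.O (x + K.pre t)) (expandAt p M.O (x + K.post t))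
  rw [expandAt_add, expandAt_add]
  exact .head hstep (reach_add_left (reach_subst_expandAt hK hM hd hsM _) _)

end Subst

/-- A marking `f` of `K ⊗_p M` started from `k` tokens on each input of `K` splits into a marking
`ν` reachable in `K` (with `p` emptied) and the contents `μ` of `M`; the `ν p` tokens on `p` are
those of the `a` tokens that entered `M` which are not among the `b` that left. -/
def Decomposes (K M : Net) (p k : ℕ) (f : Marking) : Prop :=
  ∃ ν μ : Marking, ∃ a b : ℕ, K.reach (bag k K.I) ν ∧
    M.reach (bag a M.I) (μ + bag b M.O) ∧ ν p + b = a ∧ f = Function.update ν p 0 + μ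

section Decomposes

variable {K M : Net} {p : ℕ}

lemma decomposes_bag (hpI : p ∉ K.I) (k : ℕ) : Decomposes K M p k (bag k K.I) := by
  refine ⟨bag k K.I, 0, 0, 0, .refl, ?_, by simp [bag, hpI], ?_⟩
  · rw [bag_zero, bag_zero, add_zero]
    exact .refl
  · rw [add_zero, eq_comm, Function.update_eq_self_iff, bag, if_neg hpI]

lemma Decomposes.step_right (hK : K.IsPetri) (hM : M.IsPWF) (hd : Disjoint K.nodes M.nodes)
    (hp : p ∈ K.P) (hKI : K.I ⊆ K.P) {k t : ℕ} (ht : t ∈ M.T) {x : Marking}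
    (h : Decomposes K M p k (x + M.pre t)) : Decomposes K M p k (x + M.post t) := by
  obtain ⟨ν, μ, a, b, hν, hμ, hab, hf⟩ := h
  have hle : M.pre t ≤ μ := fun q => by
    show M.pre t q ≤ μ q
    by_cases hq : q ∈ M.P
    · have hqK : q ∉ K.P := fun h => Finset.disjoint_left.1 hd
        (Finset.mem_union_left _ h) (Finset.mem_union_left _ hq)
      have hqp : q ≠ p := fun h => hqK (h ▸ hp)
      have := congrFun hf q
      simp only [Pi.add_apply, Function.update_of_ne hqp,
        hK.reach_bag_apply_eq_zero hKI hν hqK] at this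
      omega
    · simp [hM.1.pre_apply_eq_zero ht hq]
  refine ⟨ν, μ - M.pre t + M.post t, a, b, hν, hμ.tail ?_, hab, ?_⟩
  · convert stepRel_add_pre ht (μ - M.pre t + bag b M.O) using 1 <;> funext q <;>
      simp only [Pi.add_apply, Pi.sub_apply] <;> have : M.pre t q ≤ μ q := hle q <;> omega
  · funext q
    have h1 := congrFun hf q
    have h2 : M.pre t q ≤ μ q := hle q
    simp only [Pi.add_apply, Pi.sub_apply] at h1 ⊢
    omega

lemma pre_le_of_add_expandAt_eq (hK : K.IsPetri) (hM : M.IsPWF)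
    (hd : Disjoint K.nodes M.nodes) (hp : p ∈ K.P) (hKI : K.I ⊆ K.P) (hsM : M.subSound)
    {k t a b : ℕ} (ht : t ∈ K.T) {x ν μ : Marking} (hν : K.reach (bag k K.I) ν)
    (hμ : M.reach (bag a M.I) (μ + bag b M.O)) (hab : ν p + b = a)
    (hf : x + expandAt p M.O (K.pre t) = Function.update ν p 0 + μ) :
    K.pre t ≤ ν ∧ bag (K.pre t p) M.O ≤ μ := by
  have hMK : ∀ {q}, q ∈ M.P → q ∉ K.P := fun hq h => Finset.disjoint_left.1 hd
    (Finset.mem_union_left _ h) (Finset.mem_union_left _ hq)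
  have hμO : bag (K.pre t p) M.O ≤ μ := fun q => by
    show bag (K.pre t p) M.O q ≤ μ q
    by_cases hq : q ∈ M.O
    · have hqK := hMK (hM.2.2.1 hq)
      have hqp : q ≠ p := fun h => hqK (h ▸ hp)
      have := congrFun hf q
      simp only [expandAt, Pi.add_apply, Function.update_of_ne hqp, bag, if_pos hq,
        hK.reach_bag_apply_eq_zero hKI hν hqK] at this ⊢
      omega
    · simp [bag, hq]
  have hbc : b + K.pre t p ≤ a := by
    refine hM.le_of_reach_bag hsM (μ := μ - bag (K.pre t p) M.O) ?_
    convert hμ using 1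
    funext q
    have : bag (K.pre t p) M.O q ≤ μ q := hμO q
    simp only [bag_add, Pi.add_apply, Pi.sub_apply]
    omega
  refine ⟨fun q => ?_, hμO⟩
  show K.pre t q ≤ ν q
  by_cases hqp : q = p
  · subst hqp
    omega
  by_cases hq : q ∈ M.P
  · simp [hK.pre_apply_eq_zero ht (hMK hq)]
  · have h1 := congrFun hf q
    have h2 := hM.1.reach_bag_apply_eq_zero hM.2.1 hμ hq
    simp only [expandAt, Pi.add_apply, Function.update_of_ne hqp] at h1 h2
    omega

lemma Decomposes.step_left (hK : K.IsPetri) (hM : M.IsPWF) (hd : Disjoint K.nodes M.nodes)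
    (hp : p ∈ K.P) (hKI : K.I ⊆ K.P) (hsM : M.subSound) {k t : ℕ} (ht : t ∈ K.T)
    {x : Marking} (h : Decomposes K M p k (x + expandAt p M.O (K.pre t))) :
    Decomposes K M p k (x + expandAt p M.I (K.post t)) := by
  obtain ⟨ν, μ, a, b, hν, hμ, hab, hf⟩ := h
  obtain ⟨hpre, hμO⟩ := pre_le_of_add_expandAt_eq hK hM hd hp hKI hsM ht hν hμ hab hf
  refine ⟨ν - K.pre t + K.post t, μ - bag (K.pre t p) M.O + bag (K.post t p) M.I,
    a + K.post t p, b + K.pre t p, hν.tail ?_, ?_, ?_, ?_⟩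
  · convert stepRel_add_pre ht (ν - K.pre t) using 1
    funext q
    have : K.pre t q ≤ ν q := hpre q
    simp only [Pi.add_apply, Pi.sub_apply]
    omega
  · rw [bag_add]
    convert reach_add_right hμ (bag (K.post t p) M.I) using 1
    funext q
    have : bag (K.pre t p) M.O q ≤ μ q := hμO q
    simp only [bag_add, Pi.add_apply, Pi.sub_apply]
    omega
  · have : K.pre t p ≤ ν p := hpre p
    simp only [Pi.add_apply, Pi.sub_apply]
    omega
  · funext q
    have h1 := congrFun hf q
    have h2 : K.pre t q ≤ ν q := hpre q
    have h3 : bag (K.pre t p) M.O q ≤ μ q := hμO q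
    simp only [expandAt, Pi.add_apply, Pi.sub_apply, Function.update_apply] at h1 h2 h3 ⊢
    split_ifs at h1 h2 h3 ⊢ <;> omega

lemma decomposes_of_reach (hK : K.IsPetri) (hM : M.IsPWF) (hd : Disjoint K.nodes M.nodes)
    (hp : p ∈ K.P) (hpI : p ∉ K.I) (hKI : K.I ⊆ K.P) (hsM : M.subSound) {k : ℕ}
    {f : Marking} (h : (K.subst p M).reach (bag k K.I) f) : Decomposes K M p k f := by
  induction h with
  | refl => exact decomposes_bag hpI k
  | tail _ hs ih =>
    obtain ⟨t, ht, x, rfl, rfl⟩ := stepRel_iff.1 hs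
    rcases Finset.mem_union.1 ht with ht | ht
    · replace ht := (Finset.mem_erase.1 ht).2
      rw [pre_subst_of_mem_left hK hM hd hp ht] at ih
      rw [post_subst_of_mem_left hK hM hd hp ht]
      exact ih.step_left hK hM hd hp hKI hsM ht
    · rw [pre_subst_of_mem_right hK hM hd ht] at ih
      rw [post_subst_of_mem_right hK hM hd ht]
      exact ih.step_right hK hM hd hp hKI ht

lemma Decomposes.exists_of_add_bag (hM : M.IsPWF) (hd : Disjoint K.nodes M.nodes)
    (hpO : p ∉ K.O) (hKO : K.O ⊆ K.P) {k k' : ℕ} {m : Marking}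
    (h : Decomposes K M p k (m + bag k' K.O)) :
    ∃ ν μ : Marking, ∃ a b : ℕ, K.reach (bag k K.I) (ν + bag k' K.O) ∧
      M.reach (bag a M.I) (μ + bag b M.O) ∧ ν p + b = a ∧
      m = Function.update ν p 0 + μ := by
  obtain ⟨ν, μ, a, b, hν, hμ, hab, hf⟩ := h
  have hOν : bag k' K.O ≤ ν := fun q => by
    show bag k' K.O q ≤ ν q
    by_cases hq : q ∈ K.O
    · have hqM : q ∉ M.P := fun h => Finset.disjoint_left.1 hd
        (Finset.mem_union_left _ (hKO hq)) (Finset.mem_union_left _ h)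
      have hqp : q ≠ p := fun h => hpO (h ▸ hq)
      have h1 := congrFun hf q
      have h2 := hM.1.reach_bag_apply_eq_zero hM.2.1 hμ hqM
      simp only [Pi.add_apply, Function.update_of_ne hqp, bag, if_pos hq] at h1 h2 ⊢
      omega
    · simp [bag, hq]
  refine ⟨ν - bag k' K.O, μ, a, b, by rwa [tsub_add_cancel_of_le hOν], hμ, ?_, ?_⟩
  · simpa [bag, hpO] using hab
  · funext q
    have h1 := congrFun hf q
    have h2 : bag k' K.O q ≤ ν q := hOν q
    rcases eq_or_ne q p with rfl | hqp
    · simp [bag, hpO] at h1 ⊢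
      omega
    · simp only [Pi.add_apply, Pi.sub_apply, Function.update_of_ne hqp] at h1 ⊢
      omega

theorem subSound_subst (hK : K.IsPetri) (hM : M.IsPWF) (hd : Disjoint K.nodes M.nodes)
    (hp : p ∈ K.P) (hpI : p ∉ K.I) (hpO : p ∉ K.O) (hKI : K.I ⊆ K.P) (hKO : K.O ⊆ K.P)
    (hsK : K.subSound) (hsM : M.subSound) : (K.subst p M).subSound := by
  intro k k' hk m h
  rw [subst_I hpI, subst_O hpO] at h
  rw [subst_O hpO]
  obtain ⟨ν, μ, _, b, hν, hμ, rfl, rfl⟩ :=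
    (decomposes_of_reach hK hM hd hp hpI hKI hsM h).exists_of_add_bag hM hd hpO hKO
  have hMrun : (K.subst p M).reach (Function.update ν p 0 + μ) (expandAt p M.O ν) := by
    have hμ' := hsM (ν p + b) b le_add_self μ hμ
    rw [Nat.add_sub_cancel] at hμ'
    exact reach_add_left (reach_subst_of_reach_right hK hM hd hμ') _
  have hKrun := reach_subst_of_reach_left hK hM hd hp hsM (hsK k k' hk ν hν)
  rw [expandAt_eq_self (m := bag (k - k') K.O) (by simp [bag, hpO])] at hKrun
  exact hMrun.trans hKrun

end Decomposes

def rename (σ : ℕ ≃ ℕ) (X : Net) : Net where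
  P := X.P.map σ.toEmbedding
  T := X.T.map σ.toEmbedding
  F := X.F.map (σ.prodCongr σ).toEmbedding
  I := X.I.map σ.toEmbedding
  O := X.O.map σ.toEmbedding

section Rename

variable {σ : ℕ ≃ ℕ} {X : Net}

lemma pre_rename (t : ℕ) : (rename σ X).pre t = X.pre (σ.symm t) ∘ σ.symm := by
  funext q
  simp [pre, rename, Finset.mem_map_equiv]

lemma post_rename (t : ℕ) : (rename σ X).post t = X.post (σ.symm t) ∘ σ.symm := by
  funext q
  simp [post, rename, Finset.mem_map_equiv]

lemma stepRel_rename_iff {m m' : Marking} :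
    (rename σ X).stepRel m m' ↔ X.stepRel (m ∘ σ) (m' ∘ σ) := by
  simp only [stepRel_iff]
  constructor
  · rintro ⟨t, ht, x, rfl, rfl⟩
    refine ⟨σ.symm t, Finset.mem_map_equiv.1 ht, x ∘ σ, ?_, ?_⟩ <;> funext q <;>
      simp [pre_rename, post_rename]
  · rintro ⟨t, ht, x, hm, hm'⟩
    refine ⟨σ t, Finset.mem_map_of_mem _ ht, x ∘ σ.symm, ?_, ?_⟩ <;> funext q
    · simpa [pre_rename] using congrFun hm (σ.symm q)
    · simpa [post_rename] using congrFun hm' (σ.symm q)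

lemma reach_rename_iff {m m' : Marking} :
    (rename σ X).reach m m' ↔ X.reach (m ∘ σ) (m' ∘ σ) := by
  constructor
  · exact Relation.ReflTransGen.lift (· ∘ σ) (fun a b => stepRel_rename_iff.1) _ _
  · intro h
    have := Relation.ReflTransGen.lift (· ∘ σ.symm) (fun a b hab =>
      (stepRel_rename_iff (σ := σ) (X := X)).2 (by simpa [Function.comp_assoc] using hab)) _ _ h
    simpa [reach, Function.onFun, Function.comp_assoc] using this

lemma bag_map_comp (k : ℕ) (S : Finset ℕ) : bag k (S.map σ.toEmbedding) ∘ σ = bag k S := by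
  funext q
  simp [bag]

lemma subSound_rename (h : X.subSound) (σ : ℕ ≃ ℕ) : (rename σ X).subSound := by
  intro k k' hk m hm
  rw [reach_rename_iff] at hm ⊢
  have := h k k' hk (m ∘ σ) (by simpa [rename, Pi.add_comp, bag_map_comp] using hm)
  simpa [rename, bag_map_comp] using this

lemma rename_eq_self (hX : X.IsPetri) (hI : X.I ⊆ X.T) (hO : X.O ⊆ X.T)
    (hσ : ∀ x ∈ X.nodes, σ x = x) : rename σ X = X := by
  have hS : ∀ {S}, S ⊆ X.nodes → S.map σ.toEmbedding = S := fun hS =>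
    Finset.map_equiv_eq_self fun x hx => hσ x (hS hx)
  have hF : X.F.map (σ.prodCongr σ).toEmbedding = X.F := by
    refine Finset.map_equiv_eq_self fun ⟨x, y⟩ he => ?_
    obtain ⟨hx, hy⟩ := hX.mem_nodes_of_mem_F he
    simp [hσ x hx, hσ y hy]
  cases X
  simp only [rename, Net.mk.injEq]
  exact ⟨hS Finset.subset_union_left, hS Finset.subset_union_right, hF,
    hS (hI.trans Finset.subset_union_right), hS (hO.trans Finset.subset_union_right)⟩

end Rename

lemma exists_equiv_apply_eq {a b c d : ℕ} {S : Finset ℕ} (hab : a ≠ b) (hcd : c ≠ d)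
    (ha : a ∉ S) (hb : b ∉ S) (hc : c ∉ S) (hd : d ∉ S) :
    ∃ σ : ℕ ≃ ℕ, σ a = c ∧ σ b = d ∧ ∀ x ∈ S, σ x = x := by
  set b' := Equiv.swap a c b
  have hb'c : b' ≠ c := fun h =>
    hab (Equiv.swap_apply_eq_iff.1 h ▸ Equiv.swap_apply_right a c).symm
  refine ⟨(Equiv.swap a c).trans (Equiv.swap b' d), ?_, ?_, fun x hx => ?_⟩
  · simp [Equiv.swap_apply_of_ne_of_ne hb'c.symm hcd]
  · simp [b']
  · have hxa : x ≠ a := fun h => ha (h ▸ hx)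
    have hxc : x ≠ c := fun h => hc (h ▸ hx)
    have hxb' : x ≠ b' := fun h => hb (by
      rwa [Equiv.swap_apply_eq_iff.1 h.symm, Equiv.swap_apply_of_ne_of_ne hxa hxc] at *)
    have hxd : x ≠ d := fun h => hd (h ▸ hx)
    simp [Equiv.swap_apply_of_ne_of_ne hxa hxc, Equiv.swap_apply_of_ne_of_ne hxb' hxd]

lemma nodes_pc (N : Net) (a b : ℕ) : (N.pc a b).nodes = insert a (insert b N.nodes) := by
  ext x
  simp [nodes, pc]

lemma rename_pc (σ : ℕ ≃ ℕ) (X : Net) (a b : ℕ) :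
    rename σ (X.pc a b) = (rename σ X).pc (σ a) (σ b) := by
  simp [rename, pc, Finset.map_eq_image, Finset.image_union, Finset.image_image,
    Function.comp_def]

lemma IsPetri.pc {N : Net} (hN : N.IsPetri) (hI : N.I ⊆ N.T) (hO : N.O ⊆ N.T) {a b : ℕ}
    (ha : a ∉ N.T) (hb : b ∉ N.T) : (N.pc a b).IsPetri := by
  refine ⟨?_, fun e he => ?_⟩
  · simpa [Net.pc, Finset.disjoint_insert_left, ha, hb] using hN.1
  · simp only [Net.pc, Finset.mem_union, Finset.mem_image, Finset.mem_insert] at he ⊢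
    rcases he with (⟨t, ht, rfl⟩ | ⟨t, ht, rfl⟩) | he
    · exact Or.inl ⟨Or.inl rfl, hI ht⟩
    · exact Or.inr ⟨hO ht, Or.inr (Or.inl rfl)⟩
    · rcases hN.2 e he with h | h
      · exact Or.inl ⟨Or.inr (Or.inr h.1), h.2⟩
      · exact Or.inr ⟨h.1, Or.inr (Or.inr h.2)⟩

lemma subSound_pc_of_subSound_pc {X : Net} (hX : X.IsPetri) (hI : X.I ⊆ X.T)
    (hO : X.O ⊆ X.T) {a b c d : ℕ} (hab : a ≠ b) (hcd : c ≠ d) (ha : a ∉ X.nodes)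
    (hb : b ∉ X.nodes) (hc : c ∉ X.nodes) (hd : d ∉ X.nodes) (h : (X.pc a b).subSound) :
    (X.pc c d).subSound := by
  obtain ⟨σ, hσa, hσb, hσ⟩ := exists_equiv_apply_eq hab hcd ha hb hc hd
  have := subSound_rename h σ
  rwa [rename_pc, rename_eq_self hX hI hO hσ, hσa, hσb] at this

lemma pc_subst_comm (N M : Net) {p a b : ℕ} (hpI : p ∉ N.I) (hpO : p ∉ N.O) (hap : a ≠ p)
    (hbp : b ≠ p) : (N.pc a b).subst p M = (N.subst p M).pc a b := by
  simp only [Net.subst, pc, if_neg hpI, if_neg hpO, Net.mk.injEq]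
  refine ⟨?_, trivial, ?_, by simp [hap.symm], by simp [hbp.symm]⟩
  · ext x
    simp only [Finset.mem_union, Finset.mem_erase, Finset.mem_insert]
    grind
  · ext ⟨x, y⟩
    simp only [Finset.mem_union, Finset.mem_filter, Finset.mem_product, Finset.mem_image,
      mem_inEdges, mem_outEdges, Prod.mk.injEq]
    grind

lemma subSound_pc_subst {N M : Net} {p a b : ℕ} (hN : N.IsPetri) (hI : N.I ⊆ N.T)
    (hO : N.O ⊆ N.T) (hM : M.IsPWF) (hd : Disjoint N.nodes M.nodes) (hp : p ∈ N.P)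
    (ha : a ∉ N.nodes ∪ M.nodes) (hb : b ∉ N.nodes ∪ M.nodes) (hsN : (N.pc a b).subSound)
    (hsM : M.subSound) : ((N.subst p M).pc a b).subSound := by
  have hpT : p ∉ N.T := Finset.disjoint_left.1 hN.1 hp
  have hap : a ≠ p := fun h => ha (h ▸ Finset.mem_union_left _ (Finset.mem_union_left _ hp))
  have hbp : b ≠ p := fun h => hb (h ▸ Finset.mem_union_left _ (Finset.mem_union_left _ hp))
  rw [Finset.mem_union, not_or] at ha hb
  rw [← pc_subst_comm N M (fun h => hpT (hI h)) (fun h => hpT (hO h)) hap hbp]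
  refine subSound_subst (hN.pc hI hO ?_ ?_) hM ?_ ?_ ?_ ?_ ?_ ?_ hsN hsM
  · exact fun h => ha.1 (Finset.mem_union_right _ h)
  · exact fun h => hb.1 (Finset.mem_union_right _ h)
  · simpa [nodes_pc, Finset.disjoint_insert_left, ha.2, hb.2] using hd
  all_goals simp [Net.pc, Finset.subset_iff, hp, hap.symm, hbp.symm]

lemma subst_I_subset_T {K M : Net} {p : ℕ} (hI : K.I ⊆ K.T) (hpT : p ∉ K.T) :
    (K.subst p M).I ⊆ (K.subst p M).T := by
  rw [subst_I fun h => hpT (hI h), subst_T hpT]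
  exact hI.trans Finset.subset_union_left

lemma subst_O_subset_T {K M : Net} {p : ℕ} (hO : K.O ⊆ K.T) (hpT : p ∉ K.T) :
    (K.subst p M).O ⊆ (K.subst p M).T := by
  rw [subst_O fun h => hpT (hO h), subst_T hpT]
  exact hO.trans Finset.subset_union_left

end Net

open Net in
theorem stmt13 (N M : Net) (p : ℕ) (hN : N.IsTWF) (hM : M.IsPWF)
    (hd : Disjoint N.nodes M.nodes) (hp : p ∈ N.P)
    (hsN : N.tSubSound) (hsM : M.subSound) : (N.subst p M).tSubSound := by
  obtain ⟨hNpetri, hNI, hNO, -⟩ := hN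
  have hpT : p ∉ N.T := Finset.disjoint_left.1 hNpetri.1 hp
  obtain ⟨a, ha⟩ := Infinite.exists_notMem_finset (N.nodes ∪ M.nodes)
  obtain ⟨b, hb⟩ := Infinite.exists_notMem_finset (insert a (N.nodes ∪ M.nodes))
  have hab : a ≠ b := fun h => hb (h ▸ Finset.mem_insert_self a _)
  replace hb : b ∉ N.nodes ∪ M.nodes := fun h => hb (Finset.mem_insert_of_mem h)
  have hY := subSound_pc_subst hNpetri hNI hNO hM hd hp ha hb
    (hsN a b (fun h => ha (Finset.mem_union_left _ h)) (fun h => hb (Finset.mem_union_left _ h))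
      hab) hsM
  intro c d hc hd' hcd
  exact subSound_pc_of_subSound_pc (hNpetri.subst hM hd hp) (subst_I_subset_T hNI hpT)
    (subst_O_subset_T hNO hpT) hab hcd (fun h => ha (nodes_subst_subset h))
    (fun h => hb (nodes_subst_subset h)) hc hd' hY
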